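/- Let $\mathcal{A} = \{H_1,\dots,H_m\}$ be linear hyperplanes in $\mathbb{R}^n$ with $H_i = \ker\langle\alpha_i,\cdot\rangle$, $T = \bigcap_i H_i$, and let $U$ be a $k$-dimensional subspace with $\dim(U\cap T) = l$. Let $\beta_i$ be the orthogonal projection of $\alpha_i$ onto $U$. If $I\subseteq[m]$ has $|I| = k-l$ and $\{\beta_i \mid i\in I\}$ is linearly independent, then $\big(U\cap(U^\perp+T^\perp)\big) \oplus \bigcap_{i\in I}H_i = \mathbb{R}^n$. -/

import Mathlib

/-!
Put `W = U ⊓ (U ⊓ T)ᗮ = U ⊓ (Uᗮ ⊔ Tᗮ)`, of dimension `k - l`, and let `A` be the span of the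
`α i`, `i ∈ I`, so that `⋂_{i ∈ I} H i = Aᗮ`. Each `β i` lies in `W`, because
`⟪β i, y⟫ = ⟪α i, y⟫ = 0` for `y ∈ U ⊓ T`; being `k - l` independent vectors, they span `W`.
Hence the orthogonal projection `P` onto `U` maps `A` onto `W` and `dim A ≤ dim W`.
If `x ∈ W ⊓ Aᗮ`, then `⟪P a, x⟫ = ⟪a, P x⟫ = ⟪a, x⟫ = 0` for all `a ∈ A`, so `x ⊥ W` and `x = 0`;
the dimensions of `W` and `Aᗮ` then add up to at least `n`.
-/

open RealInnerProductSpace Module Submodule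

section

variable {𝕜 E : Type*} [RCLike 𝕜] [NormedAddCommGroup E] [InnerProductSpace 𝕜 E]

theorem ker_innerSL_eq_orthogonal_span_singleton (v : E) :
    LinearMap.ker (innerSL 𝕜 v).toLinearMap = (𝕜 ∙ v)ᗮ := by
  ext x
  simp [mem_orthogonal_singleton_iff_inner_right]

theorem starProjection_mem_orthogonal_inf (U V : Submodule 𝕜 E) [U.HasOrthogonalProjection]
    {v : E} (hv : v ∈ Vᗮ) : U.starProjection v ∈ (U ⊓ V)ᗮ := by
  intro y hy
  rw [← inner_starProjection_left_eq_right, starProjection_eq_self_iff.mpr hy.1]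
  exact hv y hy.2

variable [FiniteDimensional 𝕜 E]

theorem sup_orthogonal_eq_orthogonal_inf (U V : Submodule 𝕜 E) : Uᗮ ⊔ Vᗮ = (U ⊓ V)ᗮ := by
  rw [← (Uᗮ ⊔ Vᗮ).orthogonal_orthogonal, ← inf_orthogonal, orthogonal_orthogonal,
    orthogonal_orthogonal]

theorem finrank_inf_orthogonal_inf (U V : Submodule 𝕜 E) :
    finrank 𝕜 ↥(U ⊓ (U ⊓ V)ᗮ) = finrank 𝕜 U - finrank 𝕜 ↥(U ⊓ V) := by
  have := finrank_add_inf_finrank_orthogonal (inf_le_left : U ⊓ V ≤ U)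
  rw [inf_comm (U ⊓ V)ᗮ] at this
  omega

theorem isCompl_map_starProjection_orthogonal (U A : Submodule 𝕜 E)
    (hA : finrank 𝕜 A ≤ finrank 𝕜 (A.map U.starProjection.toLinearMap)) :
    IsCompl (A.map U.starProjection.toLinearMap) Aᗮ := by
  set W := A.map U.starProjection.toLinearMap
  refine (isCompl_iff_disjoint _ _ ?_).mpr ?_
  · have := finrank_add_finrank_orthogonal A
    omega
  · rw [disjoint_iff_inf_le]
    rintro x ⟨hxW, hxA⟩
    have hxU : U.starProjection x = x := by
      obtain ⟨a, -, rfl⟩ := hxW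
      exact starProjection_eq_self_iff.mpr (starProjection_apply_mem U a)
    have hxW' : x ∈ Wᗮ := by
      rintro _ ⟨a, ha, rfl⟩
      rw [ContinuousLinearMap.coe_coe, inner_starProjection_left_eq_right, hxU]
      exact hxA a ha
    exact (inf_orthogonal_eq_bot W).le ⟨hxW, hxW'⟩

end

theorem stmt6_general {n m k l : ℕ}
    (α : Fin m → EuclideanSpace ℝ (Fin n))
    (H : Fin m → Submodule ℝ (EuclideanSpace ℝ (Fin n)))
    (hH : ∀ i, H i = LinearMap.ker (innerSL ℝ (α i)).toLinearMap)
    (T : Submodule ℝ (EuclideanSpace ℝ (Fin n))) (hT : T = ⨅ i, H i)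
    (U : Submodule ℝ (EuclideanSpace ℝ (Fin n)))
    (hU : Module.finrank ℝ U = k) (hUT : Module.finrank ℝ ↥(U ⊓ T) = l)
    (β : Fin m → EuclideanSpace ℝ (Fin n))
    (hβ : ∀ i, β i = (U.orthogonalProjectionOnto (α i) : EuclideanSpace ℝ (Fin n)))
    (I : Finset (Fin m)) (hcard : I.card = k - l)
    (hind : LinearIndependent ℝ (fun i : I => β i)) :
    (U ⊓ (Uᗮ ⊔ Tᗮ)) ⊓ (⨅ i ∈ I, H i) = ⊥ ∧
    (U ⊓ (Uᗮ ⊔ Tᗮ)) ⊔ (⨅ i ∈ I, H i) = ⊤ := by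
  simp only [hH, ker_innerSL_eq_orthogonal_span_singleton] at hT ⊢
  set A := span ℝ (Set.range fun i : I => α i) with hA
  have hK : ⨅ i ∈ I, (ℝ ∙ α i)ᗮ = Aᗮ := by
    rw [hA, span_range_eq_iSup, ← iInf_orthogonal, iInf_subtype']
  have hαT : ∀ i, α i ∈ Tᗮ := fun i y hy => by
    rw [hT] at hy
    exact mem_orthogonal_singleton_iff_inner_left.mp (mem_iInf _ |>.mp hy i)
  have hspan : span ℝ (Set.range fun i : I => β i) = U ⊓ (U ⊓ T)ᗮ := by
    refine eq_of_le_of_finrank_le (span_le.mpr ?_) ?_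
    · rintro _ ⟨i, rfl⟩
      show β i ∈ _
      rw [hβ, ← starProjection_apply]
      exact ⟨coe_mem _, starProjection_mem_orthogonal_inf U T (hαT i)⟩
    · rw [finrank_inf_orthogonal_inf, finrank_span_eq_card hind, Fintype.card_coe, hcard, hU,
        hUT]
  have hmap : A.map U.starProjection.toLinearMap = U ⊓ (U ⊓ T)ᗮ := by
    rw [map_span, ← Set.range_comp, ← hspan]
    congr 1
    ext i
    simp [hβ]
  have hcompl := isCompl_map_starProjection_orthogonal U A (by
    rw [hmap, ← hspan, finrank_span_eq_card hind]
    exact finrank_range_le_card _)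
  rw [sup_orthogonal_eq_orthogonal_inf, hK, ← hmap]
  exact ⟨hcompl.inf_eq_bot, hcompl.sup_eq_top⟩

theorem stmt6 {n m k l : ℕ}
    (α : Fin m → EuclideanSpace ℝ (Fin n)) (hα : ∀ i, α i ≠ 0)
    (H : Fin m → Submodule ℝ (EuclideanSpace ℝ (Fin n)))
    (hH : ∀ i, H i = LinearMap.ker (innerSL ℝ (α i)).toLinearMap)
    (T : Submodule ℝ (EuclideanSpace ℝ (Fin n))) (hT : T = ⨅ i, H i)
    (U : Submodule ℝ (EuclideanSpace ℝ (Fin n)))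
    (hU : Module.finrank ℝ U = k) (hUT : Module.finrank ℝ ↥(U ⊓ T) = l)
    (β : Fin m → EuclideanSpace ℝ (Fin n))
    (hβ : ∀ i, β i = (U.orthogonalProjectionOnto (α i) : EuclideanSpace ℝ (Fin n)))
    (I : Finset (Fin m)) (hcard : I.card = k - l)
    (hind : LinearIndependent ℝ (fun i : I => β i)) :
    (U ⊓ (Uᗮ ⊔ Tᗮ)) ⊓ (⨅ i ∈ I, H i) = ⊥ ∧
    (U ⊓ (Uᗮ ⊔ Tᗮ)) ⊔ (⨅ i ∈ I, H i) = ⊤ :=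
  stmt6_general α H hH T hT U hU hUT β hβ I hcard hind
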